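/- arXiv:2505.21078 — 5 statements merged into one kernel-verified Lean document; each statement's English description precedes it below -/
import Mathlib

section
/- Let A₁ be a real skew-symmetric d×d matrix, let α ∈ ℝ^d, set a' = A₁·α, and let Ã be the (d+1)×(d+1) matrix fromBlocks [[0, a'ᵀ], [−a', A₁]]. If the rank of Ã equals d (equivalently, the kernel of Ã is one-dimensional), then A₁ is invertible. -/
open Matrix

theorem stmt_3 (d : ℕ) (A₁ : Matrix (Fin d) (Fin d) ℝ) (hA : A₁ᵀ = -A₁)
    (α : Fin d → ℝ) (a' : Fin d → ℝ) (ha : a' = A₁.mulVec α)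
    (hrank : (Matrix.fromBlocks (0 : Matrix (Fin 1) (Fin 1) ℝ)
        (fun _ j => a' j) (fun i _ => -a' i) A₁).rank = d) :
    IsUnit A₁ := by
  by_contra h
  have hdet : A₁.det = 0 := by
    by_contra hd
    exact h ((Matrix.isUnit_iff_isUnit_det A₁).2 (isUnit_iff_ne_zero.2 hd))
  obtain ⟨w, hw0, hw⟩ := (Matrix.exists_mulVec_eq_zero_iff).2 hdet
  set Atil := Matrix.fromBlocks (0 : Matrix (Fin 1) (Fin 1) ℝ)
      (fun _ j => a' j) (fun i _ => -a' i) A₁ with hAtil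
  have hskew : ∀ x : Fin d → ℝ, x ⬝ᵥ A₁.mulVec x = 0 := by
    intro x
    have h1 : x ⬝ᵥ A₁.mulVec x = -(x ⬝ᵥ A₁.mulVec x) := by
      calc x ⬝ᵥ A₁.mulVec x = (x ᵥ* A₁) ⬝ᵥ x := Matrix.dotProduct_mulVec x A₁ x
        _ = (A₁ᵀ.mulVec x) ⬝ᵥ x := by rw [Matrix.mulVec_transpose]
        _ = -(A₁.mulVec x ⬝ᵥ x) := by rw [hA, Matrix.neg_mulVec, neg_dotProduct]
        _ = -(x ⬝ᵥ A₁.mulVec x) := by rw [dotProduct_comm]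
    linarith
  have haw : a' ⬝ᵥ w = 0 := by
    calc a' ⬝ᵥ w = w ⬝ᵥ A₁.mulVec α := by rw [ha, dotProduct_comm]
      _ = (w ᵥ* A₁) ⬝ᵥ α := Matrix.dotProduct_mulVec w A₁ α
      _ = (A₁ᵀ.mulVec w) ⬝ᵥ α := by rw [Matrix.mulVec_transpose]
      _ = 0 := by rw [hA, Matrix.neg_mulVec, hw]; simp
  set u : Fin 1 ⊕ Fin d → ℝ := Sum.elim (fun _ => 1) α with hu
  set v : Fin 1 ⊕ Fin d → ℝ := Sum.elim (fun _ => 0) w with hv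
  have hmu : Atil.mulVec u = 0 := by
    funext i
    cases i with
    | inl i =>
      have := hskew α
      simp [hAtil, hu, Matrix.mulVec, dotProduct, Matrix.fromBlocks,
        Fintype.sum_sum_type] at this ⊢
      simpa [ha, Matrix.mulVec, dotProduct, mul_comm] using this
    | inr i =>
      have hai : a' i = ∑ j, A₁ i j * α j := by rw [ha]; rfl
      simp [hAtil, hu, Matrix.mulVec, dotProduct, Matrix.fromBlocks,
        Fintype.sum_sum_type, hai]
  have hmv : Atil.mulVec v = 0 := by
    funext i
    cases i with
    | inl i =>
      have := haw
      simp [dotProduct] at this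
      simp [hAtil, hv, Matrix.mulVec, dotProduct, Matrix.fromBlocks,
        Fintype.sum_sum_type, this]
    | inr i =>
      have := congrFun hw i
      simp [Matrix.mulVec, dotProduct] at this
      simp [hAtil, hv, Matrix.mulVec, dotProduct, Matrix.fromBlocks,
        Fintype.sum_sum_type, this]
  have hli : LinearIndependent ℝ ![u, v] := by
    rw [LinearIndependent.pair_iff]
    intro s t hst
    have h1 : s = 0 := by
      have := congrFun hst (Sum.inl 0)
      simpa [hu, hv] using this
    subst h1
    refine ⟨rfl, ?_⟩
    by_contra ht
    apply hw0
    funext i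
    have := congrFun hst (Sum.inr i)
    simp [hu, hv] at this
    rcases this with h' | h'
    · exact absurd h' ht
    · exact h'
  have hker : Submodule.span ℝ (Set.range ![u, v]) ≤ LinearMap.ker Atil.mulVecLin := by
    rw [Submodule.span_le, Set.range_subset_iff]
    intro i
    fin_cases i <;> simp [LinearMap.mem_ker, Matrix.mulVecLin_apply, hmu, hmv]
  have h2le : 2 ≤ Module.finrank ℝ (LinearMap.ker Atil.mulVecLin) := by
    have hcard := finrank_span_eq_card hli
    simp at hcard
    calc 2 = Module.finrank ℝ (Submodule.span ℝ (Set.range ![u, v])) := hcard.symm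
      _ ≤ _ := Submodule.finrank_mono hker
  have hrn := LinearMap.finrank_range_add_finrank_ker Atil.mulVecLin
  have hcard2 : Module.finrank ℝ (Fin 1 ⊕ Fin d → ℝ) = 1 + d := by
    simp [Module.finrank_pi]
  rw [hcard2] at hrn
  have hrk : Atil.rank = Module.finrank ℝ (LinearMap.range Atil.mulVecLin) := rfl
  rw [hrank] at hrk
  omega
end

section
/- Let m ≥ 1, let A₂ be a real skew-symmetric m×m matrix, let c ∈ ℝ, let a = c·e₁ ∈ ℝ^m (c times the first standard basis vector), and let A₁ be the (m+1)×(m+1) matrix fromBlocks [[0, aᵀ], [−a, A₂]]. If det A₁ ≠ 0, then the kernel of A₂ is one-dimensional, and every nonzero vector β in the kernel of A₂ has nonzero first component. -/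
open Matrix

theorem stmt_4 (m : ℕ) (hm : 0 < m) (A₂ : Matrix (Fin m) (Fin m) ℝ)
    (hA : A₂ᵀ = -A₂) (c : ℝ) (a : Fin m → ℝ)
    (ha : a = fun i => if i = (⟨0, hm⟩ : Fin m) then c else 0)
    (hdet : (Matrix.fromBlocks (0 : Matrix (Fin 1) (Fin 1) ℝ)
        (fun _ j => a j) (fun i _ => -a i) A₂).det ≠ 0) :
    Module.finrank ℝ (LinearMap.ker A₂.mulVecLin) = 1 ∧
      ∀ β : Fin m → ℝ, A₂.mulVec β = 0 → β ≠ 0 → β ⟨0, hm⟩ ≠ 0 := by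
  set e0 : Fin m := ⟨0, hm⟩ with he0
  set A₁ := Matrix.fromBlocks (0 : Matrix (Fin 1) (Fin 1) ℝ)
      (fun _ j => a j) (fun i _ => -a i) A₂ with hA₁
  -- key: kernel vector with zero first component is zero
  have key : ∀ β : Fin m → ℝ, A₂.mulVec β = 0 → β e0 = 0 → β = 0 := by
    intro β hβ h0
    by_contra hne
    have hv : A₁.mulVec (Sum.elim 0 β) = 0 := by
      rw [hA₁]
      show Matrix.fromBlocks (0 : Matrix (Fin 1) (Fin 1) ℝ) (Matrix.of fun _ j => a j)
        (Matrix.of fun i _ => -a i) A₂ *ᵥ (Sum.elim 0 β) = 0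
      rw [Matrix.fromBlocks_mulVec]
      ext x
      cases x with
      | inl i =>
        simp [Matrix.mulVec, dotProduct, ha, ite_mul, Finset.sum_ite_eq', h0]
      | inr i =>
        simp [hβ, Matrix.mulVec_zero]
    apply hdet
    rw [← Matrix.exists_mulVec_eq_zero_iff]
    refine ⟨Sum.elim 0 β, ?_, hv⟩
    intro hz
    apply hne
    funext i
    have := congrFun hz (Sum.inr i)
    simpa using this
  -- A₁ is skew-symmetric
  have hskew : A₁ᵀ = -A₁ := by
    rw [hA₁]
    show (Matrix.fromBlocks (0 : Matrix (Fin 1) (Fin 1) ℝ) (Matrix.of fun _ j => a j)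
      (Matrix.of fun i _ => -a i) A₂)ᵀ = -Matrix.fromBlocks (0 : Matrix (Fin 1) (Fin 1) ℝ)
      (Matrix.of fun _ j => a j) (Matrix.of fun i _ => -a i) A₂
    rw [Matrix.fromBlocks_transpose]
    ext x y
    cases x <;> cases y <;> simp [Matrix.fromBlocks, hA]
  -- m is odd
  have hmodd : Odd m := by
    by_contra hev
    have hm1 : Odd (Fintype.card (Fin 1 ⊕ Fin m)) := by
      simp only [Fintype.card_sum, Fintype.card_fin]
      have : Even m := Nat.not_odd_iff_even.mp hev
      simpa [Nat.add_comm] using this.add_one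
    have h1 : A₁.det = -A₁.det := by
      conv_lhs => rw [← Matrix.det_transpose, hskew, Matrix.det_neg]
      rw [hm1.neg_one_pow]
      ring
    exact hdet (by linarith)
  have hdet2 : A₂.det = 0 := by
    have h1 : A₂.det = -A₂.det := by
      conv_lhs => rw [← Matrix.det_transpose, hA, Matrix.det_neg]
      rw [Fintype.card_fin, hmodd.neg_one_pow]
      ring
    linarith
  obtain ⟨β, hβne, hβ⟩ := (Matrix.exists_mulVec_eq_zero_iff).mpr hdet2
  have hβ0 : β e0 ≠ 0 := fun h => hβne (key β hβ h)
  constructor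
  · -- kernel is span of β
    have hker : LinearMap.ker A₂.mulVecLin = Submodule.span ℝ {β} := by
      apply le_antisymm
      · intro γ hγ
        have hγ0 : A₂.mulVec γ = 0 := by simpa using hγ
        have h2 : γ - (γ e0 / β e0) • β = 0 := by
          apply key
          · rw [Matrix.mulVec_sub, Matrix.mulVec_smul, hβ, hγ0]
            simp
          · simp only [Pi.sub_apply, Pi.smul_apply, smul_eq_mul]
            field_simp
            ring
        have : γ = (γ e0 / β e0) • β := by
          have := sub_eq_zero.mp h2; exact this
        rw [this]
        exact Submodule.smul_mem _ _ (Submodule.mem_span_singleton_self β)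
      · rw [Submodule.span_le, Set.singleton_subset_iff]
        simpa using hβ
    rw [hker]
    exact finrank_span_singleton hβne
  · intro γ hγ hγne
    exact fun h => hγne (key γ hγ h)
end

section
/- Let δ, κ, ν, b be real numbers with δ ≠ 0 and ν·δ²·b² = κ·δ·b − 1. Let A_I be the 5×5 real matrix with rows (−1, 0, 0, 2, 0), (0, −3, 2δ, 2(κb+δ⁻¹), 2δb), (0, 2δ⁻¹, −4, 2κδ⁻¹b, 2b), (0, 2δ, 0, −2, 0), (−νb, 0, 0, −2νb, −2). Then for every λ ∈ ℝ, det(λ·I₅ − A_I) = (λ−1)(λ+2)(λ+6)(λ² + 5λ + 8 − 4κδb). -/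
open Matrix

set_option maxHeartbeats 2000000 in
theorem stmt_6 (δ κ ν b : ℝ) (hδ : δ ≠ 0) (hb : ν * δ ^ 2 * b ^ 2 = κ * δ * b - 1) :
    ∀ lam : ℝ,
      (lam • (1 : Matrix (Fin 5) (Fin 5) ℝ) -
        !![-1, 0, 0, 2, 0;
           0, -3, 2 * δ, 2 * (κ * b + δ⁻¹), 2 * δ * b;
           0, 2 * δ⁻¹, -4, 2 * κ * δ⁻¹ * b, 2 * b;
           0, 2 * δ, 0, -2, 0;
           -ν * b, 0, 0, -2 * ν * b, -2]).det =
      (lam - 1) * (lam + 2) * (lam + 6) * (lam ^ 2 + 5 * lam + 8 - 4 * κ * δ * b) := by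
  intro lam
  have h : (lam • (1 : Matrix (Fin 5) (Fin 5) ℝ) -
        !![-1, 0, 0, 2, 0;
           0, -3, 2 * δ, 2 * (κ * b + δ⁻¹), 2 * δ * b;
           0, 2 * δ⁻¹, -4, 2 * κ * δ⁻¹ * b, 2 * b;
           0, 2 * δ, 0, -2, 0;
           -ν * b, 0, 0, -2 * ν * b, -2]) =
      !![lam + 1, 0, 0, -2, 0;
         0, lam + 3, -(2 * δ), -(2 * (κ * b + δ⁻¹)), -(2 * δ * b);
         0, -(2 * δ⁻¹), lam + 4, -(2 * κ * δ⁻¹ * b), -(2 * b);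
         0, -(2 * δ), 0, lam + 2, 0;
         ν * b, 0, 0, 2 * ν * b, lam + 2] := by
    ext i j
    fin_cases i <;> fin_cases j <;>
      simp [Matrix.one_apply, Matrix.vecHead, Matrix.vecTail]
  rw [h]
  simp [det_succ_row_zero, Fin.sum_univ_succ, Fin.succAbove,
    Matrix.vecHead, Matrix.vecTail, Fin.castSucc, Fin.castAdd, Fin.castLE,
    Matrix.cons_val_succ]
  field_simp
  linear_combination (8*lam^2+64*lam+96) * hb
end

section
/- Let δ, κ, ν, b be real numbers with δ ≠ 0 and ν·δ²·b² = κ·δ·b − 1. Let A_I be the 4×4 real matrix with rows (−1, 0, 0, 2), (−2νδb², −3, 2δ, 2(κb+δ⁻¹)), (−2νb², 2δ⁻¹, −4, 2κδ⁻¹b), (0, 2δ, 0, −2). Then for every λ ∈ ℝ, det(λ·I₄ − A_I) = (λ−1)(λ+6)(λ² + 5λ + 8 − 4κδb). -/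
open Matrix

theorem stmt_8 (δ κ ν b : ℝ) (hδ : δ ≠ 0) (hb : ν * δ ^ 2 * b ^ 2 = κ * δ * b - 1) :
    ∀ lam : ℝ,
      (lam • (1 : Matrix (Fin 4) (Fin 4) ℝ) -
        !![-1, 0, 0, 2;
           -2 * ν * δ * b ^ 2, -3, 2 * δ, 2 * (κ * b + δ⁻¹);
           -2 * ν * b ^ 2, 2 * δ⁻¹, -4, 2 * κ * δ⁻¹ * b;
           0, 2 * δ, 0, -2]).det =
      (lam - 1) * (lam + 6) * (lam ^ 2 + 5 * lam + 8 - 4 * κ * δ * b) := by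
  intro lam
  simp [Matrix.det_succ_row_zero, Fin.sum_univ_succ, Matrix.smul_apply, Matrix.one_apply,
    Fin.succ_ne_zero, Matrix.sub_apply, Matrix.cons_val_succ, show (Fin.succAbove 3 2 : Fin 4) = 2 from rfl]
  field_simp
  linear_combination (8*(lam+6)) * hb
end

section
/- For every real C > 0 and every integer d ≥ 2 there exists λ₀ > 0 such that for every λ ≥ λ₀ there exist ε > 0 and c > 0 with the following property: whenever m > 0, θ ≥ 0, φ₁, …, φ_d, ℓ, R are real numbers satisfying |φⱼ| ≤ ε·m for all 1 ≤ j ≤ d, |ℓ| ≤ C·(Σ_{j=2}^d φⱼ²)^{1/2}/m, and |R| ≤ C·(Σ_{j=1}^d φⱼ²)²/m², the quantity Q = θφ₁² + Σ_{j=2}^d φⱼ² − 2ℓφ₁²(1 + ℓ/2) + 2λ(φ₁⁴/m²)(1 + ℓ − λφ₁²/(2m²)) + R satisfies Q ≥ c·(Σ_{j=2}^d φⱼ² + θφ₁² + φ₁⁴/m²). -/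
set_option maxHeartbeats 1000000 in
theorem stmt_14 :
    ∀ C : ℝ, 0 < C → ∀ d : ℕ, 2 ≤ d →
      ∃ lam₀ : ℝ, 0 < lam₀ ∧
        ∀ lam : ℝ, lam₀ ≤ lam →
          ∃ ε : ℝ, 0 < ε ∧ ∃ c : ℝ, 0 < c ∧
            ∀ m : ℝ, 0 < m → ∀ θ : ℝ, 0 ≤ θ → ∀ φ : ℕ → ℝ, ∀ ℓ R : ℝ,
              (∀ j : ℕ, 1 ≤ j → j ≤ d → |φ j| ≤ ε * m) →
              |ℓ| ≤ C * Real.sqrt (∑ j ∈ Finset.Icc 2 d, (φ j) ^ 2) / m →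
              |R| ≤ C * (∑ j ∈ Finset.Icc 1 d, (φ j) ^ 2) ^ 2 / m ^ 2 →
              θ * (φ 1) ^ 2 + (∑ j ∈ Finset.Icc 2 d, (φ j) ^ 2)
                  - 2 * ℓ * (φ 1) ^ 2 * (1 + ℓ / 2)
                  + 2 * lam * ((φ 1) ^ 4 / m ^ 2) *
                      (1 + ℓ - lam * (φ 1) ^ 2 / (2 * m ^ 2))
                  + R ≥
                c * ((∑ j ∈ Finset.Icc 2 d, (φ j) ^ 2) + θ * (φ 1) ^ 2
                    + (φ 1) ^ 4 / m ^ 2) := by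
  intro C hC d hd
  refine ⟨4 * C ^ 2 + 2 * C + 1, by positivity, ?_⟩
  intro lam hlam
  have hlam1 : (1 : ℝ) ≤ lam := by nlinarith [sq_nonneg C, hC]
  have hlam0 : (0 : ℝ) < lam := by linarith
  have hd2 : (2 : ℝ) ≤ (d : ℝ) := by exact_mod_cast hd
  set ε : ℝ := 1 / (4 * (C + 1) * ((d : ℝ) + 1) * lam) with hεdef
  have hε : 0 < ε := by
    rw [hεdef]; positivity
  refine ⟨ε, hε, 1/4, by norm_num, ?_⟩
  intro m hm θ hθ φ L R hφ hL hR
  have hm2 : (0 : ℝ) < m ^ 2 := by positivity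
  set S : ℝ := ∑ j ∈ Finset.Icc 2 d, φ j ^ 2 with hSdef
  set P : ℝ := φ 1 ^ 2 with hPdef
  have hS0 : 0 ≤ S := Finset.sum_nonneg fun j _ => sq_nonneg _
  have hP0 : 0 ≤ P := sq_nonneg _
  -- bound on P
  have hφ1 : |φ 1| ≤ ε * m := hφ 1 le_rfl (by omega)
  have hPle : P ≤ ε ^ 2 * m ^ 2 := by
    nlinarith only [hφ1, sq_abs (φ 1), abs_nonneg (φ 1), hPdef]
  -- bound on S
  have hSle : S ≤ (d : ℝ) * (ε ^ 2 * m ^ 2) := by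
    have h1 : S ≤ ((Finset.Icc 2 d).card : ℝ) * ((ε * m) ^ 2) := by
      rw [hSdef]
      calc ∑ j ∈ Finset.Icc 2 d, φ j ^ 2
          ≤ ∑ j ∈ Finset.Icc 2 d, (ε * m) ^ 2 := by
            apply Finset.sum_le_sum
            intro j hj
            simp only [Finset.mem_Icc] at hj
            have := hφ j (by omega) hj.2
            nlinarith only [this, sq_abs (φ j), abs_nonneg (φ j)]
        _ = ((Finset.Icc 2 d).card : ℝ) * ((ε * m) ^ 2) := by
            rw [Finset.sum_const, nsmul_eq_mul]
    have h2 : ((Finset.Icc 2 d).card : ℝ) ≤ (d : ℝ) := by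
      rw [Nat.card_Icc]
      have : d + 1 - 2 ≤ d := by omega
      exact_mod_cast this
    nlinarith only [h1, h2, sq_nonneg (ε * m)]
  -- sqrt S
  set s : ℝ := Real.sqrt S with hsdef
  have hs0 : 0 ≤ s := Real.sqrt_nonneg _
  have hs2 : s ^ 2 = S := Real.sq_sqrt hS0
  have hsle : s ≤ (d : ℝ) * ε * m := by
    have hdm : 0 ≤ (d : ℝ) * ε * m := by positivity
    nlinarith only [hs2, hSle, hs0, hdm, hd2, hε.le, hm.le]
  -- bounds on L
  have hLm : |L| * m ≤ C * s := (le_div_iff₀ hm).mp hL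
  have hLabs : 0 ≤ |L| := abs_nonneg _
  have hLm1 : L * m ≤ C * s := le_trans (by nlinarith only [le_abs_self L, hm.le, hLabs]) hLm
  have hLm2 : -(C * s) ≤ L * m := by
    nlinarith only [neg_abs_le L, hLm, hm.le, hLabs]
  have hLd : |L| ≤ C * (d : ℝ) * ε := by
    have h1 : |L| * m ≤ C * ((d : ℝ) * ε * m) :=
      le_trans hLm (by nlinarith only [hsle, hC.le])
    nlinarith only [h1, hm]
  have hL2m : L ^ 2 * m ^ 2 ≤ C ^ 2 * S := by
    nlinarith only [hLm, sq_abs L, mul_nonneg hLabs hm.le, mul_nonneg hC.le hs0, hs2]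
  -- R bound
  have hT : ∑ j ∈ Finset.Icc 1 d, φ j ^ 2 = P + S := by
    have hins : Finset.Icc 1 d = insert 1 (Finset.Icc 2 d) := by
      ext x
      simp only [Finset.mem_Icc, Finset.mem_insert]
      omega
    rw [hins, Finset.sum_insert (by simp)]
  rw [hT] at hR
  have hRm : -(C * (P + S) ^ 2) ≤ R * m ^ 2 := by
    have h1 : -(C * (P + S) ^ 2 / m ^ 2) ≤ R := (abs_le.mp hR).1
    have h2 : -(C * (P + S) ^ 2) / m ^ 2 ≤ R := by rw [neg_div]; exact h1
    exact (div_le_iff₀ hm2).mp h2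
  -- epsilon smallness facts
  have hεeq : ε * (4 * (C + 1) * ((d : ℝ) + 1) * lam) = 1 := by
    rw [hεdef]; field_simp
  have hdpos : (0 : ℝ) < (d : ℝ) := by linarith
  have hCd : (0 : ℝ) < C * (d : ℝ) := mul_pos hC hdpos
  have hprod : (C * (d : ℝ) + C + (d : ℝ) + 1) * 1 ≤ (C * (d : ℝ) + C + (d : ℝ) + 1) * lam :=
    mul_le_mul_of_nonneg_left hlam1 (by nlinarith only [hCd, hC, hdpos])
  have hK12 : (12 : ℝ) ≤ 4 * (C + 1) * ((d : ℝ) + 1) * lam := by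
    linarith only [hprod, hCd.le, hC.le, hd2]
  have hεle : ε ≤ 1 / 12 := by
    linarith only [mul_le_mul_of_nonneg_left hK12 hε.le, hεeq]
  have h4cd : 4 * C * (d : ℝ) ≤ 4 * (C + 1) * ((d : ℝ) + 1) * lam := by
    linarith only [hprod, hC.le, hd2]
  have hcd : C * (d : ℝ) * ε ≤ 1 / 4 := by
    linarith only [mul_le_mul_of_nonneg_left h4cd hε.le, hεeq]
  have hεa : 2 * lam * C * (d : ℝ) * ε ≤ lam / 2 := by
    linarith only [mul_nonneg hlam0.le (sub_nonneg.2 hcd)]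
  have h4l : 4 * lam ≤ 4 * (C + 1) * ((d : ℝ) + 1) * lam := by
    linarith only [mul_nonneg hCd.le hlam0.le, mul_nonneg hC.le hlam0.le,
      mul_nonneg hdpos.le hlam0.le]
  have hlε : lam * ε ≤ 1 / 4 := by
    linarith only [mul_le_mul_of_nonneg_left h4l hε.le, hεeq]
  have hεb : lam ^ 2 * ε ^ 2 ≤ 1 / 4 := by
    have h1 : (lam * ε) * (lam * ε) ≤ (1/4) * (1/4) :=
      mul_le_mul hlε hlε (mul_nonneg hlam0.le hε.le) (by norm_num)
    nlinarith only [h1]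
  have h2cd : 2 * (C ^ 2 + 2 * C + C * (d : ℝ)) ≤ 4 * (C + 1) * ((d : ℝ) + 1) * lam := by
    have h1 : 0 ≤ (C * (d : ℝ)) * (lam - 1) := mul_nonneg hCd.le (by linarith)
    linarith only [h1, hlam, sq_nonneg C, hC.le, hCd.le,
      mul_nonneg hC.le hlam0.le, mul_nonneg hdpos.le hlam0.le]
  have hεc' : (C ^ 2 + 2 * C + C * (d : ℝ)) * ε ≤ 1 / 2 := by
    linarith only [mul_le_mul_of_nonneg_left h2cd hε.le, hεeq]
  have hεc : (C ^ 2 + 2 * C + C * (d : ℝ)) * ε ^ 2 ≤ 1 / 2 := by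
    have h1 := mul_le_mul_of_nonneg_right hεc' hε.le
    nlinarith only [h1, hεle, hε.le]
  -- error term bounds (multiplied by m^4)
  have hPm3 : (0 : ℝ) ≤ P * m ^ 3 := by positivity
  have hB1 : -(S / 4 * m ^ 4) - 4 * C ^ 2 * P ^ 2 * m ^ 2 ≤ -(2 * L * P * m ^ 4) := by
    have e0 := mul_le_mul_of_nonneg_right hLm1 hPm3
    have e1 : 0 ≤ S * m ^ 4 / 4 - 2 * C * s * P * m ^ 3 + 4 * C ^ 2 * P ^ 2 * m ^ 2 := by
      have h := sq_nonneg (s * m ^ 2 / 2 - 2 * C * P * m)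
      have hs2m : s ^ 2 * m ^ 4 = S * m ^ 4 := by rw [hs2]
      nlinarith only [h, hs2m]
    linarith only [e0, e1]
  have hB2 : -(C ^ 2 * ε ^ 2 * S * m ^ 4) ≤ -(L ^ 2 * P * m ^ 4) := by
    have h2 : (L ^ 2 * m ^ 2) * (P * m ^ 2) ≤ (C ^ 2 * S) * (ε ^ 2 * m ^ 2 * m ^ 2) := by
      apply mul_le_mul hL2m (by nlinarith only [hPle, hm2.le]) (by positivity)
        (by positivity)
    nlinarith only [h2]
  have hB3 : -(2 * lam * C * (d : ℝ) * ε * P ^ 2 * m ^ 2) ≤ 2 * lam * L * P ^ 2 * m ^ 2 := by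
    have h1 : -(C * (d : ℝ) * ε) ≤ L := by
      linarith only [neg_abs_le L, hLd]
    have h2 := mul_le_mul_of_nonneg_left h1
      (by positivity : (0:ℝ) ≤ 2 * lam * P ^ 2 * m ^ 2)
    nlinarith only [h2]
  have hB4 : -(lam ^ 2 * ε ^ 2 * P ^ 2 * m ^ 2) ≤ -(lam ^ 2 * P ^ 3) := by
    have e1 : P ^ 2 * P ≤ P ^ 2 * (ε ^ 2 * m ^ 2) :=
      mul_le_mul_of_nonneg_left hPle (sq_nonneg P)
    have e2 := mul_le_mul_of_nonneg_left e1 (sq_nonneg lam)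
    nlinarith only [e2]
  have hB5 : -(C * P ^ 2 * m ^ 2) - 2 * C * ε ^ 2 * S * m ^ 4 - C * (d : ℝ) * ε ^ 2 * S * m ^ 4
      ≤ R * m ^ 4 := by
    have h2 : -(C * (P + S) ^ 2) * m ^ 2 ≤ (R * m ^ 2) * m ^ 2 :=
      mul_le_mul_of_nonneg_right hRm hm2.le
    have h3 : P * (S * m ^ 2) ≤ (ε ^ 2 * m ^ 2) * (S * m ^ 2) :=
      mul_le_mul_of_nonneg_right hPle (mul_nonneg hS0 hm2.le)
    have h4 : S * (S * m ^ 2) ≤ ((d : ℝ) * (ε ^ 2 * m ^ 2)) * (S * m ^ 2) :=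
      mul_le_mul_of_nonneg_right hSle (mul_nonneg hS0 hm2.le)
    have h3' := mul_le_mul_of_nonneg_left h3 hC.le
    have h4' := mul_le_mul_of_nonneg_left h4 hC.le
    nlinarith only [h2, h3', h4']
  -- the main polynomial inequality
  have hN : 0 ≤ θ * P * m ^ 4 + S * m ^ 4 - 2 * L * P * m ^ 4 - L ^ 2 * P * m ^ 4
      + 2 * lam * P ^ 2 * m ^ 2 + 2 * lam * L * P ^ 2 * m ^ 2 - lam ^ 2 * P ^ 3
      + R * m ^ 4 - 1/4 * (S * m ^ 4 + θ * P * m ^ 4 + P ^ 2 * m ^ 2) := by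
    have hcS : 0 ≤ (1/2 - (C ^ 2 + 2 * C + C * (d : ℝ)) * ε ^ 2) * (S * m ^ 4) :=
      mul_nonneg (by linarith only [hεc]) (by positivity)
    have hcP : 0 ≤ (2 * lam - 4 * C ^ 2 - 2 * lam * C * (d : ℝ) * ε
        - lam ^ 2 * ε ^ 2 - C - 1/4) * (P ^ 2 * m ^ 2) := by
      apply mul_nonneg _ (by positivity)
      linarith only [hεa, hεb, hlam, hC.le, sq_nonneg C]
    have hθP : 0 ≤ θ * P * m ^ 4 := by positivity
    linarith only [hB1, hB2, hB3, hB4, hB5, hcS, hcP, hθP]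
  -- convert back to the divided form
  rw [ge_iff_le, ← sub_nonneg]
  have hiden : θ * P + S - 2 * L * P * (1 + L / 2)
      + 2 * lam * (φ 1 ^ 4 / m ^ 2) * (1 + L - lam * P / (2 * m ^ 2)) + R
      - 1/4 * (S + θ * P + φ 1 ^ 4 / m ^ 2)
      = (θ * P * m ^ 4 + S * m ^ 4 - 2 * L * P * m ^ 4 - L ^ 2 * P * m ^ 4
      + 2 * lam * P ^ 2 * m ^ 2 + 2 * lam * L * P ^ 2 * m ^ 2 - lam ^ 2 * P ^ 3
      + R * m ^ 4 - 1/4 * (S * m ^ 4 + θ * P * m ^ 4 + P ^ 2 * m ^ 2)) / m ^ 4 := by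
    have hφ14 : φ 1 ^ 4 = P ^ 2 := by rw [hPdef]; ring
    rw [hφ14]
    field_simp
    ring
  rw [hiden]
  exact div_nonneg hN (by positivity)
end
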